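/- Let G be a groupoid, R an associative ring, and α = (D_g, α_g)_{g∈G} a partial action of G on R such that D_g is s-unital for every g ∈ G and R = ⊕_{e∈G₀} D_e. Then R is G-prime if, and only if, R ⋊_α G is graded prime. -/

import Mathlib

open scoped Classical

/-- A (discrete) groupoid, presented as its set of morphisms `G`, with source map `s`,
range map `r`, inversion `inv` and a partially defined multiplication `mul`.
The units (identity morphisms, i.e. the objects) are the elements `e` with `r e = e`. -/
structure DGroupoid (G : Type*) where
  s : G → G
  r : G → G
  inv : G → G
  mul : (g h : G) → s g = r h → G
  s_inv : ∀ g, s (inv g) = r g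
  r_inv : ∀ g, r (inv g) = s g
  inv_inv : ∀ g, inv (inv g) = g
  r_mul : ∀ g h (p : s g = r h), r (mul g h p) = r g
  s_mul : ∀ g h (p : s g = r h), s (mul g h p) = s h
  r_idem : ∀ g, r (r g) = r g
  s_of_r : ∀ g, s (r g) = r g
  r_of_s : ∀ g, r (s g) = s g
  s_idem : ∀ g, s (s g) = s g
  assoc : ∀ g h k (p : s g = r h) (q : s h = r k) (pq : s (mul g h p) = r k)
      (qp : s g = r (mul h k q)), mul (mul g h p) k pq = mul g (mul h k q) qp
  id_mul : ∀ g (p : s (r g) = r g), mul (r g) g p = g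
  mul_id : ∀ g (p : s g = r (s g)), mul g (s g) p = g
  mul_inv : ∀ g (p : s g = r (inv g)), mul g (inv g) p = r g
  inv_mul : ∀ g (p : s (inv g) = r g), mul (inv g) g p = s g

namespace DGroupoid

/-- `e` is a unit (an object, identified with its identity morphism) of the groupoid. -/
def unit {G : Type*} (𝔾 : DGroupoid G) (e : G) : Prop := 𝔾.r e = e

end DGroupoid

section RingDefs

variable {R : Type*} [NonUnitalRing R]

/-- A subset of a (possibly non-unital) ring is a two-sided ideal. -/
def IsRingIdeal (J : Set R) : Prop :=
  (0 : R) ∈ J ∧ (∀ x ∈ J, ∀ y ∈ J, x + y ∈ J) ∧ (∀ x ∈ J, -x ∈ J) ∧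
    ∀ x ∈ J, ∀ y : R, x * y ∈ J ∧ y * x ∈ J

/-- A subset of a ring, viewed as a ring, is s-unital: every `x` in it lies in
`xT ∩ Tx`. -/
def IsSUnitalSet (J : Set R) : Prop :=
  ∀ x ∈ J, (∃ u ∈ J, x * u = x) ∧ (∃ v ∈ J, v * x = x)

end RingDefs

/-- A partial action `α = (D_g, α_g)_{g ∈ G}` of a groupoid `𝔾` on a
(possibly non-unital, associative) ring `R`:  each `D_{r g}` is a two-sided ideal of `R`,
each `D_g` is a two-sided ideal of `D_{r g}`, and `α_g = act g` restricts to a ring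
isomorphism `D_{g⁻¹} → D_g` (the function `act g` is arbitrary outside `D_{g⁻¹}`),
satisfying the axioms of a partial action. -/
structure PartialAction {G : Type*} (𝔾 : DGroupoid G) (R : Type*) [NonUnitalRing R] where
  D : G → Set R
  zero_mem : ∀ g, (0 : R) ∈ D g
  add_mem : ∀ g, ∀ x ∈ D g, ∀ y ∈ D g, x + y ∈ D g
  neg_mem : ∀ g, ∀ x ∈ D g, -x ∈ D g
  subset_r : ∀ g, D g ⊆ D (𝔾.r g)
  idealR : ∀ g, IsRingIdeal (D (𝔾.r g))
  idealInR : ∀ g, ∀ x ∈ D g, ∀ y ∈ D (𝔾.r g), x * y ∈ D g ∧ y * x ∈ D g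
  act : G → R → R
  act_mem : ∀ g, ∀ x ∈ D (𝔾.inv g), act g x ∈ D g
  act_add : ∀ g, ∀ x ∈ D (𝔾.inv g), ∀ y ∈ D (𝔾.inv g), act g (x + y) = act g x + act g y
  act_mul : ∀ g, ∀ x ∈ D (𝔾.inv g), ∀ y ∈ D (𝔾.inv g), act g (x * y) = act g x * act g y
  act_inv : ∀ g, ∀ x ∈ D (𝔾.inv g), act (𝔾.inv g) (act g x) = x
  act_unit : ∀ e, 𝔾.unit e → ∀ x ∈ D e, act e x = x
  act_comp_mem : ∀ g h (p : 𝔾.s g = 𝔾.r h), ∀ x, x ∈ D (𝔾.inv g) → x ∈ D h →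
      act (𝔾.inv h) x ∈ D (𝔾.inv (𝔾.mul g h p))
  act_comp : ∀ g h (p : 𝔾.s g = 𝔾.r h), ∀ x ∈ D (𝔾.inv h), act h x ∈ D (𝔾.inv g) →
      act g (act h x) = act (𝔾.mul g h p) x

namespace PartialAction

variable {G : Type*} {R : Type*} [NonUnitalRing R] {𝔾 : DGroupoid G} (P : PartialAction 𝔾 R)

/-- `R = ⊕_{e ∈ G₀} D_e`: every element of `R` decomposes as a finite sum of elements
of the `D_e` (`e` a unit), and the decomposition is unique (a finite sum of elements of
the distinct `D_e`'s which vanishes has all terms zero). -/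
def directSum : Prop :=
  (∀ x : R, ∃ f : G →₀ R, (∀ g ∈ f.support, 𝔾.unit g) ∧ (∀ g, f g ∈ P.D g) ∧
      (f.sum fun _ v => v) = x) ∧
    ∀ f : G →₀ R, (∀ g ∈ f.support, 𝔾.unit g) → (∀ g, f g ∈ P.D g) →
      (f.sum fun _ v => v) = 0 → f = 0

/-- The carrier of the partial skew groupoid ring `R ⋊_α G`: finitely supported
functions `a : G →₀ R` (thought of as `Σ_g a_g δ_g`) with `a g ∈ D g`. -/
def carrier : Set (G →₀ R) := {a | ∀ g, a g ∈ P.D g}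

/-- The multiplication of the partial skew groupoid ring:
`(a_g δ_g)(b_h δ_h) = α_g(α_{g⁻¹}(a_g) b_h) δ_{gh}` when `(g,h)` is composable,
and `0` otherwise. -/
noncomputable def skewMul (a b : G →₀ R) : G →₀ R :=
  a.support.sum fun g => b.support.sum fun h =>
    if p : 𝔾.s g = 𝔾.r h then
      Finsupp.single (𝔾.mul g h p) (P.act g (P.act (𝔾.inv g) (a g) * b h))
    else 0

/-- The subset `⊕_{e ∈ G₀} D_e δ_e` of `R ⋊_α G`: elements supported on units. -/
def diag : Set (G →₀ R) := {a | (∀ g, a g ∈ P.D g) ∧ ∀ g ∈ a.support, 𝔾.unit g}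

/-- `I` is a two-sided ideal of the partial skew groupoid ring `R ⋊_α G`. -/
def IsSkewIdeal (I : Set (G →₀ R)) : Prop :=
  I ⊆ P.carrier ∧ (0 : G →₀ R) ∈ I ∧ (∀ x ∈ I, ∀ y ∈ I, x + y ∈ I) ∧ (∀ x ∈ I, -x ∈ I) ∧
    ∀ x ∈ I, ∀ y ∈ P.carrier, P.skewMul x y ∈ I ∧ P.skewMul y x ∈ I

/-- The projection `P₀ : R ⋊_α G → R`, `Σ_g a_g δ_g ↦ Σ_{e ∈ G₀} a_e`. -/
noncomputable def P0 (_P : PartialAction 𝔾 R) (a : G →₀ R) : R :=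
  a.sum fun g v => if 𝔾.unit g then v else 0

/-- An ideal `I` of `R ⋊_α G` is `G`-graded if it is generated by its homogeneous
components, i.e. `I = ⊕_g (I ∩ D_g δ_g)`. -/
def IsGradedIdeal (I : Set (G →₀ R)) : Prop :=
  P.IsSkewIdeal I ∧ ∀ a ∈ I, ∀ g : G, Finsupp.single g (a g) ∈ I

/-- `J` is a `G`-invariant (two-sided) ideal of `R`: `α_g(D_{g⁻¹} ∩ J) ⊆ J`. -/
def IsInvIdeal (J : Set R) : Prop :=
  IsRingIdeal J ∧ ∀ g, ∀ x ∈ P.D (𝔾.inv g) ∩ J, P.act g x ∈ J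

/-- The subset `J ⋊_{α^J} G = ⊕_g (J ∩ D_g) δ_g` of `R ⋊_α G` attached to a
`G`-invariant ideal `J` of `R`. -/
def skewOf (J : Set R) : Set (G →₀ R) := {a | ∀ g, a g ∈ P.D g ∩ J}

/-- `⊕_{e ∈ G₀} D_e δ_e` is a maximal commutative subring of `R ⋊_α G`: it is
commutative and coincides with its centralizer. -/
def IsMaxCommDiag : Prop :=
  (∀ a ∈ P.diag, ∀ b ∈ P.diag, P.skewMul a b = P.skewMul b a) ∧
    ∀ b ∈ P.carrier, (∀ a ∈ P.diag, P.skewMul a b = P.skewMul b a) → b ∈ P.diag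

/-- The partial action has the intersection property: every nonzero ideal of
`R ⋊_α G` intersects `⊕_{e ∈ G₀} D_e δ_e` nontrivially. -/
def HasIntersectionProperty : Prop :=
  ∀ I : Set (G →₀ R), P.IsSkewIdeal I → I ≠ {0} → I ∩ P.diag ≠ {0}

/-- `R` is `G`-simple: the only `G`-invariant ideals of `R` are `{0}` and `R`. -/
def GSimple : Prop := ∀ J : Set R, P.IsInvIdeal J → J = {0} ∨ J = Set.univ

/-- `R` is `G`-prime: if `I, J` are `G`-invariant ideals with `IJ = {0}`, then
`I = {0}` or `J = {0}`. -/
def GPrime : Prop :=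
  ∀ I J : Set R, P.IsInvIdeal I → P.IsInvIdeal J →
    (∀ x ∈ I, ∀ y ∈ J, x * y = 0) → I = {0} ∨ J = {0}

/-- `R ⋊_α G` is graded simple. -/
def GradedSimple : Prop :=
  ∀ I : Set (G →₀ R), P.IsGradedIdeal I → I = {0} ∨ I = P.carrier

/-- `R ⋊_α G` is graded prime. -/
def GradedPrime : Prop :=
  ∀ I J : Set (G →₀ R), P.IsGradedIdeal I → P.IsGradedIdeal J →
    (∀ x ∈ I, ∀ y ∈ J, P.skewMul x y = 0) → I = {0} ∨ J = {0}

/-- `R ⋊_α G` is a prime ring. -/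
def SkewPrime : Prop :=
  ∀ I J : Set (G →₀ R), P.IsSkewIdeal I → P.IsSkewIdeal J →
    (∀ x ∈ I, ∀ y ∈ J, P.skewMul x y = 0) → I = {0} ∨ J = {0}

/-- `R ⋊_α G` is a simple ring. -/
def SkewSimple : Prop :=
  ∀ I : Set (G →₀ R), P.IsSkewIdeal I → I = {0} ∨ I = P.carrier

end PartialAction

/-! Under `R = ⊕_{e ∈ G₀} D_e`, the map `a ↦ Σ_g a_g` identifies the subring
`⊕_{e ∈ G₀} D_e δ_e` of `R ⋊_α G` with `R`: on it the skew product is the pointwise one, and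
`D_e D_{e'} = 0` for distinct units. A graded ideal `I` of `R ⋊_α G` then yields the ideal
`I ∩ R` of `R`; it is `G`-invariant because s-unitality lets one pass inside `I` from `x δ_{s g}`
to `α_g(x) δ_g` and from `z δ_g` to `z δ_{r g}`, and the latter move also shows that
`I ∩ R = 0` forces `I = 0`. Conversely a `G`-invariant ideal `J` of `R` yields the graded ideal
`J ⋊ G`, which is nonzero if `J` is, since the components of `x ∈ J` are products `x u ∈ J`
with `u` a local unit. Both constructions turn vanishing products into vanishing products. -/

namespace DGroupoid

variable {G : Type*} (𝔾 : DGroupoid G)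

theorem mul_congr {g g' h h' : G} (hg : g = g') (hh : h = h') (p : 𝔾.s g = 𝔾.r h)
    (p' : 𝔾.s g' = 𝔾.r h') : 𝔾.mul g h p = 𝔾.mul g' h' p' := by
  subst hg hh; rfl

theorem unit_r (g : G) : 𝔾.unit (𝔾.r g) := 𝔾.r_idem g

theorem s_eq_of_unit {e : G} (he : 𝔾.unit e) : 𝔾.s e = e := by
  rw [← he, 𝔾.s_of_r]

theorem mul_unit_self {e : G} (he : 𝔾.unit e) (p : 𝔾.s e = 𝔾.r e) : 𝔾.mul e e p = e :=
  (𝔾.mul_congr he.symm rfl p (𝔾.s_of_r e)).trans (𝔾.id_mul e _)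

theorem inv_eq_of_unit {e : G} (he : 𝔾.unit e) : 𝔾.inv e = e := by
  have hr : 𝔾.r (𝔾.inv e) = e := by rw [𝔾.r_inv, 𝔾.s_eq_of_unit he]
  have p : 𝔾.s e = 𝔾.r (𝔾.inv e) := (𝔾.r_inv e).symm
  calc 𝔾.inv e = 𝔾.mul (𝔾.r (𝔾.inv e)) (𝔾.inv e) (𝔾.s_of_r _) := (𝔾.id_mul _ _).symm
    _ = 𝔾.mul e (𝔾.inv e) p := 𝔾.mul_congr hr rfl _ _
    _ = e := (𝔾.mul_inv e p).trans he

end DGroupoid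

/-- On `⊕_{e ∈ G₀} D_e δ_e` this is the inverse of the decomposition `R = ⊕_{e ∈ G₀} D_e`. -/
noncomputable def coeffSum {G R : Type*} [AddCommMonoid R] : (G →₀ R) →+ R :=
  Finsupp.liftAddHom fun _ => AddMonoidHom.id R

theorem coeffSum_apply {G R : Type*} [AddCommMonoid R] (a : G →₀ R) :
    coeffSum a = a.sum fun _ v => v := rfl

theorem coeffSum_single {G R : Type*} [AddCommMonoid R] (g : G) (x : R) :
    coeffSum (Finsupp.single g x) = x :=
  Finsupp.sum_single_index rfl

namespace PartialAction

open Finsupp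

variable {G R : Type*} [NonUnitalRing R] {𝔾 : DGroupoid G} (P : PartialAction 𝔾 R)

theorem act_zero (g : G) : P.act g 0 = 0 := by
  have h := P.act_add g 0 (P.zero_mem _) 0 (P.zero_mem _)
  rwa [add_zero, left_eq_add] at h

theorem act_inv_mem {g : G} {y : R} (hy : y ∈ P.D g) : P.act (𝔾.inv g) y ∈ P.D (𝔾.inv g) :=
  P.act_mem _ y (by rwa [𝔾.inv_inv])

theorem act_act_inv {g : G} {y : R} (hy : y ∈ P.D g) : P.act g (P.act (𝔾.inv g) y) = y := by
  simpa only [𝔾.inv_inv] using P.act_inv (𝔾.inv g) y (by rwa [𝔾.inv_inv])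

theorem isRingIdeal_D_of_unit {e : G} (he : 𝔾.unit e) : IsRingIdeal (P.D e) := by
  have h := P.idealR e
  rwa [he] at h

theorem mul_mem_inter {g h : G} (p : 𝔾.s g = 𝔾.r h) {x y : R}
    (hx : x ∈ P.D (𝔾.inv g)) (hy : y ∈ P.D h) : x * y ∈ P.D (𝔾.inv g) ∧ x * y ∈ P.D h := by
  have hrr : 𝔾.r (𝔾.inv g) = 𝔾.r h := by rw [𝔾.r_inv, p]
  exact ⟨(P.idealInR _ x hx y (hrr ▸ P.subset_r h hy)).1,
    (P.idealInR h y hy x (hrr ▸ P.subset_r _ hx)).2⟩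

theorem act_mem_mul {g h : G} (p : 𝔾.s g = 𝔾.r h) {y : R}
    (hy : y ∈ P.D (𝔾.inv g)) (hy' : y ∈ P.D h) : P.act g y ∈ P.D (𝔾.mul g h p) := by
  have hback : P.act h (P.act (𝔾.inv h) y) = y := P.act_act_inv hy'
  have hcomp := P.act_comp g h p _ (P.act_inv_mem hy') (hback.symm ▸ hy)
  rw [hback] at hcomp
  rw [hcomp]
  exact P.act_mem _ _ (P.act_comp_mem g h p y hy hy')

theorem skewCoeff_mem {g h : G} (p : 𝔾.s g = 𝔾.r h) {x y : R} (hx : x ∈ P.D g)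
    (hy : y ∈ P.D h) : P.act g (P.act (𝔾.inv g) x * y) ∈ P.D (𝔾.mul g h p) :=
  have hxy := P.mul_mem_inter p (P.act_inv_mem hx) hy
  P.act_mem_mul p hxy.1 hxy.2

theorem single_mem_carrier {g : G} {x : R} (hx : x ∈ P.D g) : single g x ∈ P.carrier := by
  intro k
  rw [single_apply]
  split_ifs with h
  · exact h ▸ hx
  · exact P.zero_mem k

theorem skewMul_single (g h : G) (x y : R) :
    P.skewMul (single g x) (single h y) =
      if p : 𝔾.s g = 𝔾.r h then single (𝔾.mul g h p) (P.act g (P.act (𝔾.inv g) x * y))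
      else 0 := by
  by_cases hx : x = 0
  · split_ifs <;> simp [skewMul, hx, act_zero]
  by_cases hy : y = 0
  · split_ifs <;> simp [skewMul, hy, act_zero]
  simp only [skewMul, support_single _ hx, support_single _ hy,
    Finset.sum_singleton, single_eq_same]

theorem skewMul_eq_sum_single (a b : G →₀ R) :
    P.skewMul a b = ∑ g ∈ a.support, ∑ h ∈ b.support,
      P.skewMul (single g (a g)) (single h (b h)) := by
  simp only [skewMul_single]
  rfl

theorem skewMul_apply_mem (S : G → Set R) (h0 : ∀ k, 0 ∈ S k)
    (hadd : ∀ k, ∀ x ∈ S k, ∀ y ∈ S k, x + y ∈ S k) {a b : G →₀ R}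
    (hterm : ∀ g h (p : 𝔾.s g = 𝔾.r h),
      P.act g (P.act (𝔾.inv g) (a g) * b h) ∈ S (𝔾.mul g h p)) (k : G) :
    P.skewMul a b k ∈ S k := by
  rw [skewMul, finsetSum_apply]
  refine Finset.sum_induction _ (· ∈ S k) (fun x y hx hy => hadd k x hx y hy) (h0 k) fun g _ => ?_
  rw [finsetSum_apply]
  refine Finset.sum_induction _ (· ∈ S k) (fun x y hx hy => hadd k x hx y hy) (h0 k) fun h _ => ?_
  split_ifs with p
  · rw [single_apply]
    split_ifs with hk
    · exact hk ▸ hterm g h p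
    · exact h0 k
  · exact h0 k

theorem skewMul_single_of_unit {g h : G} (hg : 𝔾.unit g) (hh : 𝔾.unit h) {x y : R}
    (hx : x ∈ P.D g) (hy : y ∈ P.D h) :
    P.skewMul (single g x) (single h y) = if g = h then single g (x * y) else 0 := by
  rw [skewMul_single]
  split_ifs with p hgh hgh
  · subst hgh
    rw [𝔾.mul_unit_self hg p, 𝔾.inv_eq_of_unit hg, P.act_unit g hg x hx,
      P.act_unit g hg _ ((P.isRingIdeal_D_of_unit hg).2.2.2 x hx y).1]
  · rw [𝔾.s_eq_of_unit hg, hh] at p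
    exact absurd p hgh
  · exact absurd (by rw [𝔾.s_eq_of_unit hg, hh, hgh]) p
  · rfl

theorem zero_mem_diag : (0 : G →₀ R) ∈ P.diag :=
  ⟨fun g => P.zero_mem g, fun _ hg => absurd rfl (mem_support_iff.mp hg)⟩

theorem single_mem_diag {e : G} (he : 𝔾.unit e) {x : R} (hx : x ∈ P.D e) :
    single e x ∈ P.diag :=
  ⟨P.single_mem_carrier hx, fun _ hg => Finset.mem_singleton.mp (support_single_subset hg) ▸ he⟩

theorem add_mem_diag {a b : G →₀ R} (ha : a ∈ P.diag) (hb : b ∈ P.diag) : a + b ∈ P.diag :=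
  ⟨fun g => P.add_mem g _ (ha.1 g) _ (hb.1 g),
    fun g hg => (Finset.mem_union.mp (support_add hg)).elim (ha.2 g) (hb.2 g)⟩

theorem neg_mem_diag {a : G →₀ R} (ha : a ∈ P.diag) : -a ∈ P.diag :=
  ⟨fun g => P.neg_mem g _ (ha.1 g), fun g hg => ha.2 g (support_neg a ▸ hg)⟩

theorem sub_mem_diag {a b : G →₀ R} (ha : a ∈ P.diag) (hb : b ∈ P.diag) : a - b ∈ P.diag :=
  sub_eq_add_neg a b ▸ P.add_mem_diag ha (P.neg_mem_diag hb)

theorem mul_mem_diag {a b : G →₀ R} (ha : a ∈ P.diag) (hb : b ∈ P.diag) : a * b ∈ P.diag :=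
  ⟨fun g => (P.idealInR g _ (ha.1 g) _ (P.subset_r g (hb.1 g))).1,
    fun g hg => ha.2 g (Finset.mem_of_mem_inter_left (support_mul hg))⟩

theorem skewMul_eq_mul_of_mem_diag {a b : G →₀ R} (ha : a ∈ P.diag) (hb : b ∈ P.diag) :
    P.skewMul a b = a * b :=
  calc P.skewMul a b
      = ∑ g ∈ a.support, ∑ h ∈ b.support, if g = h then single g (a g * b h) else 0 := by
        rw [skewMul_eq_sum_single]
        exact Finset.sum_congr rfl fun g hg => Finset.sum_congr rfl fun h hh =>
          P.skewMul_single_of_unit (ha.2 g hg) (hb.2 h hh) (ha.1 g) (hb.1 h)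
    _ = ∑ g ∈ a.support, single g (a g * b g) := by
        refine Finset.sum_congr rfl fun g _ => ?_
        rw [Finset.sum_ite_eq]
        split_ifs with hg
        · rfl
        · rw [notMem_support_iff.mp hg, mul_zero, single_zero]
    _ = a * b := by
        ext k
        by_cases hk : a k = 0 <;> simp [finsetSum_apply, single_apply, mul_apply, hk]

theorem coeffSum_injOn (hds : P.directSum) : Set.InjOn coeffSum P.diag := fun a ha b hb hab =>
  sub_eq_zero.mp <| hds.2 _ (P.sub_mem_diag ha hb).2 (P.sub_mem_diag ha hb).1 <| by
    rw [← coeffSum_apply, map_sub, hab, sub_self]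

theorem mul_eq_zero_of_ne (hds : P.directSum) {e e' : G} (he : 𝔾.unit e) (he' : 𝔾.unit e')
    (hne : e ≠ e') {x y : R} (hx : x ∈ P.D e) (hy : y ∈ P.D e') : x * y = 0 := by
  have hxy : single e (x * y) = single e' (x * y) :=
    P.coeffSum_injOn hds (P.single_mem_diag he ((P.isRingIdeal_D_of_unit he).2.2.2 x hx y).1)
      (P.single_mem_diag he' ((P.isRingIdeal_D_of_unit he').2.2.2 y hy x).2)
      (by rw [coeffSum_single, coeffSum_single])
  by_contra h0
  exact hne ((single_left_inj h0).mp hxy)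

theorem coeffSum_mul_of_mem_D (hds : P.directSum) {a : G →₀ R} (ha : a ∈ P.diag) {e : G}
    (he : 𝔾.unit e) {u : R} (hu : u ∈ P.D e) : coeffSum a * u = a e * u := by
  rw [coeffSum_apply, Finsupp.sum, Finset.sum_mul]
  refine Finset.sum_eq_single e
    (fun g hg hge => P.mul_eq_zero_of_ne hds (ha.2 g hg) he hge (ha.1 g) hu) fun he' => ?_
  rw [notMem_support_iff.mp he', zero_mul]

theorem coeffSum_mul (hds : P.directSum) {a b : G →₀ R} (ha : a ∈ P.diag) (hb : b ∈ P.diag) :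
    coeffSum (a * b) = coeffSum a * coeffSum b := by
  rw [coeffSum_apply b, Finsupp.sum, Finset.mul_sum, coeffSum_apply,
    sum_of_support_subset (a * b) (fun g hg => Finset.mem_of_mem_inter_right (support_mul hg))
      (fun _ v => v) fun _ _ => rfl]
  exact Finset.sum_congr rfl fun h hh =>
    mul_apply.trans (P.coeffSum_mul_of_mem_D hds ha (hb.2 h hh) (hb.1 h)).symm

theorem exists_mem_diag_coeffSum_eq (hds : P.directSum) (x : R) :
    ∃ a ∈ P.diag, coeffSum a = x := by
  obtain ⟨a, hau, haD, hax⟩ := hds.1 x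
  exact ⟨a, ⟨haD, hau⟩, hax⟩

/-- The ideal of `R` that corresponds to `I ∩ ⊕_{e ∈ G₀} D_e δ_e` under the isomorphism
`⊕_{e ∈ G₀} D_e δ_e ≅ R`. -/
def baseIdeal (I : Set (G →₀ R)) : Set R := coeffSum '' (I ∩ P.diag)

theorem mem_baseIdeal_of_single_mem {I : Set (G →₀ R)} {e : G} (he : 𝔾.unit e) {x : R}
    (hx : x ∈ P.D e) (hxI : single e x ∈ I) : x ∈ P.baseIdeal I :=
  ⟨single e x, ⟨hxI, P.single_mem_diag he hx⟩, coeffSum_single e x⟩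

section

variable {P} {I J : Set (G →₀ R)}

theorem single_r_mem_of_single_mem (hsu : ∀ g, IsSUnitalSet (P.D g)) (hI : P.IsSkewIdeal I)
    {g : G} {z : R} (hz : z ∈ P.D g) (hzI : single g z ∈ I) : single (𝔾.r g) z ∈ I := by
  -- `(z δ_g)(d δ_{g⁻¹}) = z δ_{r g}` for a right unit `d ∈ D_{g⁻¹}` of `α_{g⁻¹}(z)`
  obtain ⟨⟨d, hd, hzd⟩, -⟩ := hsu _ _ (P.act_inv_mem hz)
  have p : 𝔾.s g = 𝔾.r (𝔾.inv g) := (𝔾.r_inv g).symm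
  have h := (hI.2.2.2.2 _ hzI _ (P.single_mem_carrier hd)).1
  rwa [skewMul_single, dif_pos p, 𝔾.mul_inv g p, hzd, P.act_act_inv hz] at h

theorem single_act_mem_of_single_mem (hsu : ∀ g, IsSUnitalSet (P.D g)) (hI : P.IsSkewIdeal I)
    {g : G} {x : R} (hx : x ∈ P.D (𝔾.inv g)) (hxI : single (𝔾.s g) x ∈ I) :
    single g (P.act g x) ∈ I := by
  -- `(α_g(v) δ_g)(x δ_{s g}) = α_g(x) δ_g` for a left unit `v ∈ D_{g⁻¹}` of `x`
  obtain ⟨-, v, hv, hvx⟩ := hsu _ x hx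
  have p : 𝔾.s g = 𝔾.r (𝔾.s g) := (𝔾.r_of_s g).symm
  have h := (hI.2.2.2.2 _ hxI _ (P.single_mem_carrier (P.act_mem g v hv))).2
  rwa [skewMul_single, dif_pos p, 𝔾.mul_id g p, P.act_inv g v hv, hvx] at h

theorem isRingIdeal_baseIdeal (hds : P.directSum) (hI : P.IsSkewIdeal I) :
    IsRingIdeal (P.baseIdeal I) := by
  refine ⟨⟨0, ⟨hI.2.1, P.zero_mem_diag⟩, map_zero _⟩, ?_, ?_, ?_⟩
  · rintro _ ⟨a, ⟨haI, ha⟩, rfl⟩ _ ⟨b, ⟨hbI, hb⟩, rfl⟩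
    exact ⟨a + b, ⟨hI.2.2.1 a haI b hbI, P.add_mem_diag ha hb⟩, map_add _ a b⟩
  · rintro _ ⟨a, ⟨haI, ha⟩, rfl⟩
    exact ⟨-a, ⟨hI.2.2.2.1 a haI, P.neg_mem_diag ha⟩, map_neg _ a⟩
  · rintro _ ⟨a, ⟨haI, ha⟩, rfl⟩ y
    obtain ⟨b, hb, rfl⟩ := P.exists_mem_diag_coeffSum_eq hds y
    have hab := hI.2.2.2.2 a haI b hb.1
    rw [P.skewMul_eq_mul_of_mem_diag ha hb, P.skewMul_eq_mul_of_mem_diag hb ha] at hab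
    exact ⟨⟨a * b, ⟨hab.1, P.mul_mem_diag ha hb⟩, P.coeffSum_mul hds ha hb⟩,
      ⟨b * a, ⟨hab.2, P.mul_mem_diag hb ha⟩, P.coeffSum_mul hds hb ha⟩⟩

theorem act_mem_baseIdeal (hsu : ∀ g, IsSUnitalSet (P.D g)) (hds : P.directSum)
    (hI : P.IsSkewIdeal I) {g : G} {x : R} (hx : x ∈ P.D (𝔾.inv g))
    (hxI : x ∈ P.baseIdeal I) : P.act g x ∈ P.baseIdeal I := by
  obtain ⟨a, ⟨haI, ha⟩, hax⟩ := hxI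
  have hxs : x ∈ P.D (𝔾.s g) := 𝔾.r_inv g ▸ P.subset_r _ hx
  have hsingle : single (𝔾.s g) x ∈ I := by
    rwa [← P.coeffSum_injOn hds ha (P.single_mem_diag (𝔾.r_of_s g) hxs)
      (by rw [hax, coeffSum_single])]
  have hact := P.act_mem g x hx
  exact P.mem_baseIdeal_of_single_mem (𝔾.unit_r g) (P.subset_r g hact)
    (single_r_mem_of_single_mem hsu hI hact (single_act_mem_of_single_mem hsu hI hx hsingle))

theorem isInvIdeal_baseIdeal (hsu : ∀ g, IsSUnitalSet (P.D g)) (hds : P.directSum)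
    (hI : P.IsSkewIdeal I) : P.IsInvIdeal (P.baseIdeal I) :=
  ⟨isRingIdeal_baseIdeal hds hI, fun _ _ hx => act_mem_baseIdeal hsu hds hI hx.1 hx.2⟩

theorem baseIdeal_mul_eq_zero (hds : P.directSum)
    (hIJ : ∀ a ∈ I, ∀ b ∈ J, P.skewMul a b = 0) {x y : R} (hx : x ∈ P.baseIdeal I)
    (hy : y ∈ P.baseIdeal J) : x * y = 0 := by
  obtain ⟨a, ⟨haI, ha⟩, rfl⟩ := hx
  obtain ⟨b, ⟨hbJ, hb⟩, rfl⟩ := hy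
  rw [← P.coeffSum_mul hds ha hb, ← P.skewMul_eq_mul_of_mem_diag ha hb, hIJ a haI b hbJ,
    map_zero]

theorem eq_zero_of_baseIdeal_eq_zero (hsu : ∀ g, IsSUnitalSet (P.D g))
    (hI : P.IsGradedIdeal I) (h : P.baseIdeal I = {0}) : I = {0} := by
  refine Set.eq_singleton_iff_unique_mem.mpr ⟨hI.1.2.1, fun a ha => Finsupp.ext fun g => ?_⟩
  have haD := hI.1.1 ha g
  have hg : a g ∈ P.baseIdeal I := P.mem_baseIdeal_of_single_mem (𝔾.unit_r g)
    (P.subset_r g haD) (single_r_mem_of_single_mem hsu hI.1 haD (hI.2 a ha g))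
  rwa [h] at hg

end

section

variable {P} {J : Set R}

theorem single_mem_skewOf (hJ : (0 : R) ∈ J) {g : G} {x : R} (hx : x ∈ P.D g ∩ J) :
    single g x ∈ P.skewOf J := by
  intro k
  rw [single_apply]
  split_ifs with hk
  · exact hk ▸ hx
  · exact ⟨P.zero_mem k, hJ⟩

theorem act_inv_mem_of_isInvIdeal (hJ : P.IsInvIdeal J) {g : G} {x : R} (hx : x ∈ P.D g)
    (hxJ : x ∈ J) : P.act (𝔾.inv g) x ∈ J :=
  hJ.2 _ x ⟨by rwa [𝔾.inv_inv], hxJ⟩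

theorem skewCoeff_mem_of_isInvIdeal (hJ : P.IsInvIdeal J) {g h : G} (p : 𝔾.s g = 𝔾.r h)
    {x y : R} (hx : x ∈ P.D g) (hy : y ∈ P.D h) (hxy : x ∈ J ∨ y ∈ J) :
    P.act g (P.act (𝔾.inv g) x * y) ∈ J := by
  refine hJ.2 g _ ⟨(P.mul_mem_inter p (P.act_inv_mem hx) hy).1, ?_⟩
  rcases hxy with hxJ | hyJ
  · exact (hJ.1.2.2.2 _ (act_inv_mem_of_isInvIdeal hJ hx hxJ) y).1
  · exact (hJ.1.2.2.2 y hyJ _).2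

theorem isGradedIdeal_skewOf (hJ : P.IsInvIdeal J) : P.IsGradedIdeal (P.skewOf J) := by
  have h0 : ∀ k, (0 : R) ∈ P.D k ∩ J := fun k => ⟨P.zero_mem k, hJ.1.1⟩
  have hadd : ∀ k, ∀ x ∈ P.D k ∩ J, ∀ y ∈ P.D k ∩ J, x + y ∈ P.D k ∩ J := fun k x hx y hy =>
    ⟨P.add_mem k x hx.1 y hy.1, hJ.1.2.1 x hx.2 y hy.2⟩
  refine ⟨⟨fun a ha g => (ha g).1, h0, fun a ha b hb g => ?_, fun a ha g => ?_,
    fun a ha b hb => ⟨?_, ?_⟩⟩, fun a ha g => single_mem_skewOf hJ.1.1 (ha g)⟩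
  · rw [Finsupp.add_apply]
    exact hadd g _ (ha g) _ (hb g)
  · rw [Finsupp.neg_apply]
    exact ⟨P.neg_mem g _ (ha g).1, hJ.1.2.2.1 _ (ha g).2⟩
  · exact P.skewMul_apply_mem _ h0 hadd fun g h p =>
      ⟨P.skewCoeff_mem p (ha g).1 (hb h),
        skewCoeff_mem_of_isInvIdeal hJ p (ha g).1 (hb h) (.inl (ha g).2)⟩
  · exact P.skewMul_apply_mem _ h0 hadd fun g h p =>
      ⟨P.skewCoeff_mem p (hb g) (ha h).1,
        skewCoeff_mem_of_isInvIdeal hJ p (hb g) (ha h).1 (.inr (ha h).2)⟩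

theorem skewMul_eq_zero_of_mem_skewOf {I : Set R} (hI : P.IsInvIdeal I)
    (hIJ : ∀ x ∈ I, ∀ y ∈ J, x * y = 0) {a b : G →₀ R} (ha : a ∈ P.skewOf I)
    (hb : b ∈ P.skewOf J) : P.skewMul a b = 0 := by
  refine Finset.sum_eq_zero fun g _ => Finset.sum_eq_zero fun h _ => ?_
  split_ifs
  · rw [hIJ _ (act_inv_mem_of_isInvIdeal hI (ha g).1 (ha g).2) _ (hb h).2, P.act_zero,
      single_zero]
  · rfl

theorem eq_zero_of_skewOf_eq_zero (hsu : ∀ g, IsSUnitalSet (P.D g)) (hds : P.directSum)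
    (hJ : IsRingIdeal J) (h : P.skewOf J = {0}) : J = {0} := by
  refine Set.eq_singleton_iff_unique_mem.mpr ⟨hJ.1, fun x hx => ?_⟩
  obtain ⟨a, ha, rfl⟩ := P.exists_mem_diag_coeffSum_eq hds x
  suffices a = 0 by rw [this, map_zero]
  refine Finsupp.ext fun e => by_contra fun hae => ?_
  obtain ⟨⟨u, hu, hau⟩, -⟩ := hsu e (a e) (ha.1 e)
  have he : 𝔾.unit e := ha.2 e (mem_support_iff.mpr hae)
  -- the `e`-component of `x` is `x u ∈ J`
  have haJ : a e ∈ J := by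
    rw [← hau, ← P.coeffSum_mul_of_mem_D hds ha he hu]
    exact (hJ.2.2.2 _ hx u).1
  have hs := single_mem_skewOf hJ.1 ⟨ha.1 e, haJ⟩
  rw [h] at hs
  exact hae (single_eq_zero.mp hs)

end

end PartialAction

/-- **Statement 12.** `R` is `G`-prime if, and only if, `R ⋊_α G` is graded prime. -/
theorem gPrime_iff_gradedPrime {G R : Type*} [NonUnitalRing R]
    (𝔾 : DGroupoid G) (P : PartialAction 𝔾 R)
    (hsu : ∀ g, IsSUnitalSet (P.D g)) (hds : P.directSum) :
    P.GPrime ↔ P.GradedPrime := by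
  constructor
  · intro hprime I J hI hJ hIJ
    exact (hprime _ _ (P.isInvIdeal_baseIdeal hsu hds hI.1) (P.isInvIdeal_baseIdeal hsu hds hJ.1)
      fun x hx y hy => P.baseIdeal_mul_eq_zero hds hIJ hx hy).imp
      (P.eq_zero_of_baseIdeal_eq_zero hsu hI) (P.eq_zero_of_baseIdeal_eq_zero hsu hJ)
  · intro hprime I J hI hJ hIJ
    exact (hprime _ _ (P.isGradedIdeal_skewOf hI) (P.isGradedIdeal_skewOf hJ)
      fun a ha b hb => P.skewMul_eq_zero_of_mem_skewOf hI hIJ ha hb).imp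
      (P.eq_zero_of_skewOf_eq_zero hsu hds hI.1) (P.eq_zero_of_skewOf_eq_zero hsu hds hJ.1)
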